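/- For μ,ν ∈ P₂(ℝ^d): IGW(μ,ν) ≤ (2M₂(μ) + 2M₂(ν))^{1/2} · W₂(μ,ν). Conversely, if the uncentered covariance matrices Σ_μ and Σ_ν are nonsingular, then for any O ∈ O_{μ,ν}: ( (1/2)(λ_min(Σ_μ)² + λ_min(Σ_ν)²) )^{1/4} · W₂(μ, O_♯ν) ≤ IGW(μ,ν). -/

import Mathlib

open MeasureTheory Filter Matrix Set
open scoped RealInnerProductSpace Kronecker ENNReal NNReal

noncomputable section

abbrev Ed (d : ℕ) : Type := EuclideanSpace ℝ (Fin d)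

variable {d : ℕ}

def P2 (μ : Measure (Ed d)) : Prop :=
  IsProbabilityMeasure μ ∧ Integrable (fun x => ‖x‖ ^ 2) μ

def M2 (μ : Measure (Ed d)) : ℝ := ∫ x, ‖x‖ ^ 2 ∂μ

def covMat (μ : Measure (Ed d)) : Matrix (Fin d) (Fin d) ℝ :=
  Matrix.of fun i j => ∫ x, x i * x j ∂μ

def IsCoupling (π : Measure (Ed d × Ed d)) (μ ν : Measure (Ed d)) : Prop :=
  π.map Prod.fst = μ ∧ π.map Prod.snd = ν

def igwCost (π : Measure (Ed d × Ed d)) : ℝ :=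
  ∫ p, (⟪p.1.1, p.2.1⟫ - ⟪p.1.2, p.2.2⟫) ^ 2 ∂(π.prod π)

def IGW (μ ν : Measure (Ed d)) : ℝ :=
  Real.sqrt (sInf {c : ℝ | ∃ π : Measure (Ed d × Ed d), IsCoupling π μ ν ∧ c = igwCost π})

def IsOptIGW (π : Measure (Ed d × Ed d)) (μ ν : Measure (Ed d)) : Prop :=
  IsCoupling π μ ν ∧ ∀ π' : Measure (Ed d × Ed d), IsCoupling π' μ ν → igwCost π ≤ igwCost π'

def crossCov (π : Measure (Ed d × Ed d)) : Matrix (Fin d) (Fin d) ℝ :=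
  Matrix.of fun i j => ∫ p, p.1 i * p.2 j ∂π

def frobSq (A : Matrix (Fin d) (Fin d) ℝ) : ℝ := ∑ i, ∑ j, A i j ^ 2

def W2 (μ ν : Measure (Ed d)) : ℝ :=
  Real.sqrt (sInf {c : ℝ | ∃ π : Measure (Ed d × Ed d), IsCoupling π μ ν ∧
    c = ∫ p, ‖p.1 - p.2‖ ^ 2 ∂π})

def lambdaMin (A : Matrix (Fin d) (Fin d) ℝ) : ℝ :=
  sInf {r : ℝ | ∃ v : Fin d → ℝ, ∑ i, v i ^ 2 = 1 ∧ r = ∑ i, v i * A.mulVec v i}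

def lambdaMax (A : Matrix (Fin d) (Fin d) ℝ) : ℝ :=
  sSup {r : ℝ | ∃ v : Fin d → ℝ, ∑ i, v i ^ 2 = 1 ∧ r = ∑ i, v i * A.mulVec v i}

def IsOrthoMat (O : Matrix (Fin d) (Fin d) ℝ) : Prop := O * Oᵀ = 1

def matMap (O : Matrix (Fin d) (Fin d) ℝ) : Ed d → Ed d :=
  fun x => (EuclideanSpace.equiv (Fin d) ℝ).symm (O.mulVec (EuclideanSpace.equiv (Fin d) ℝ x))

def matPush (O : Matrix (Fin d) (Fin d) ℝ) (μ : Measure (Ed d)) : Measure (Ed d) :=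
  μ.map (matMap O)

def OSet (μ ν : Measure (Ed d)) : Set (Matrix (Fin d) (Fin d) ℝ) :=
  {O | ∃ (π : Measure (Ed d × Ed d)) (P Q L : Matrix (Fin d) (Fin d) ℝ),
    IsOptIGW π μ ν ∧ IsOrthoMat P ∧ IsOrthoMat Q ∧
    (∀ i j, i ≠ j → L i j = 0) ∧ (∀ i, 0 ≤ L i i) ∧
    crossCov π = P * L * Qᵀ ∧ O = P * Qᵀ}

/-- One step of the IGW minimizing movement (proximal) scheme followed by the
orthogonal PSD transform. -/
def IsMMStep (F : Measure (Ed d) → EReal) (τ : ℝ) (μ ν : Measure (Ed d)) : Prop :=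
  ∃ σ : Measure (Ed d), P2 σ ∧
    (∀ κ : Measure (Ed d), P2 κ →
      F σ + ((IGW σ μ ^ 2 / (2 * τ) : ℝ) : EReal) ≤ F κ + ((IGW κ μ ^ 2 / (2 * τ) : ℝ) : EReal)) ∧
    ∃ O ∈ OSet μ σ, ν = matPush O σ

def IsMMScheme (F : Measure (Ed d) → EReal) (μ0 : Measure (Ed d)) (τ : ℝ) (n : ℕ)
    (ρ : ℕ → Measure (Ed d)) : Prop :=
  ρ 0 = μ0 ∧ ∀ i < n, IsMMStep F τ (ρ i) (ρ (i + 1))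

/-- Piecewise constant interpolation: `ρ̄(t) = ρ i` for `t ∈ ((i-1)τ, iτ]`. -/
def pcInterp (ρ : ℕ → Measure (Ed d)) (τ : ℝ) (t : ℝ) : Measure (Ed d) := ρ ⌈t / τ⌉₊

def RotInvariant (F : Measure (Ed d) → EReal) : Prop :=
  ∀ O : Matrix (Fin d) (Fin d) ℝ, IsOrthoMat O → ∀ μ : Measure (Ed d), F (matPush O μ) = F μ

def WeakTendsto (μs : ℕ → Measure (Ed d)) (μ : Measure (Ed d)) : Prop :=
  ∀ f : Ed d → ℝ, Continuous f → (∃ C, ∀ x, |f x| ≤ C) →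
    Tendsto (fun n => ∫ x, f x ∂(μs n)) atTop (nhds (∫ x, f x ∂μ))

def WeakLSC (F : Measure (Ed d) → EReal) : Prop :=
  ∀ (μs : ℕ → Measure (Ed d)) (μ : Measure (Ed d)),
    (∀ n, P2 (μs n)) → P2 μ → WeakTendsto μs μ →
      F μ ≤ liminf (fun n => F (μs n)) atTop

/-- `Fs` is the infimum of `F` over `P₂(ℝ^d)` (in particular `F` is bounded below). -/
def IsInfimum (F : Measure (Ed d) → EReal) (Fs : ℝ) : Prop :=
  (∀ μ : Measure (Ed d), P2 μ → (Fs : EReal) ≤ F μ) ∧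
    ∀ ε : ℝ, 0 < ε → ∃ μ : Measure (Ed d), P2 μ ∧ F μ < ((Fs + ε : ℝ) : EReal)

/-- A gluing of two couplings sharing the first marginal. -/
def IsGluing (π : Measure (Ed d × Ed d × Ed d)) (π01 π02 : Measure (Ed d × Ed d)) : Prop :=
  π.map (fun p => (p.1, p.2.1)) = π01 ∧ π.map (fun p => (p.1, p.2.2)) = π02

/-- Point on the generalized geodesic: push forward by `(x,y,z) ↦ (1-t)y + tz`. -/
def genGeo (π : Measure (Ed d × Ed d × Ed d)) (t : ℝ) : Measure (Ed d) :=
  π.map fun p => (1 - t) • p.2.1 + t • p.2.2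

/-- The glued plan underlying a generalized IGW geodesic from `μ1` to `μ2` w.r.t. `μ0`. -/
def IsGenGeoGluing (π : Measure (Ed d × Ed d × Ed d)) (μ0 μ1 μ2 : Measure (Ed d)) : Prop :=
  ∃ π01 π02 : Measure (Ed d × Ed d),
    IsOptIGW π01 μ0 μ1 ∧ IsOptIGW π02 μ0 μ2 ∧
    (crossCov π01).PosSemidef ∧ IsUnit (crossCov π01).det ∧
    (crossCov π02).PosSemidef ∧ IsUnit (crossCov π02).det ∧
    IsGluing π π01 π02

/-- `∬ |⟨y,y'⟩-⟨z,z'⟩|² dπ⊗π` for a glued plan. -/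
def geoDistortion (π : Measure (Ed d × Ed d × Ed d)) : ℝ :=
  ∫ p, (⟪p.1.2.1, p.2.2.1⟫ - ⟪p.1.2.2, p.2.2.2⟫) ^ 2 ∂(π.prod π)

/-- `λ`-convexity along generalized IGW geodesics. -/
def LambdaConvex (F : Measure (Ed d) → EReal) (lam : ℝ) : Prop :=
  ∀ (μ0 μ1 μ2 : Measure (Ed d)) (π : Measure (Ed d × Ed d × Ed d)),
    P2 μ0 → P2 μ1 → P2 μ2 → IsGenGeoGluing π μ0 μ1 μ2 →
    ∀ t ∈ Icc (0 : ℝ) 1,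
      F (genGeo π t) ≤ ((1 - t : ℝ) : EReal) * F μ1 + ((t : ℝ) : EReal) * F μ2
        - ((lam * t * (1 - t) * geoDistortion π : ℝ) : EReal)

def l2diff (μ : Measure (Ed d)) (T : Ed d → Ed d) : ℝ :=
  Real.sqrt (∫ x, ‖T x - x‖ ^ 2 ∂μ)

/-- Strong Fréchet subdifferential of `F` at `μ`. -/
def IsStrongSubdiff (F : Measure (Ed d) → EReal) (μ : Measure (Ed d)) (ξ : Ed d → Ed d) : Prop :=
  MemLp ξ 2 μ ∧
  ∀ ε : ℝ, 0 < ε → ∃ δ : ℝ, 0 < δ ∧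
    ∀ T : Ed d → Ed d, AEMeasurable T μ → Integrable (fun x => ‖T x - x‖ ^ 2) μ →
      l2diff μ T ≤ δ →
      F μ + (((∫ x, ⟪ξ x, T x - x⟫ ∂μ) - ε * l2diff μ T : ℝ) : EReal) ≤ F (μ.map T)

/-- Regularity of `F` in the sense of Ambrosio-Gigli-Savaré, Definition 10.1.4. -/
def AGSRegular (F : Measure (Ed d) → EReal) : Prop :=
  ∀ (μs : ℕ → Measure (Ed d)) (μ : Measure (Ed d)) (ξs : ℕ → Ed d → Ed d) (ξ : Ed d → Ed d)
    (C phi : ℝ),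
    (∀ n, P2 (μs n)) → P2 μ →
    (∀ n, IsStrongSubdiff F (μs n) (ξs n)) →
    (∀ n, ∫ x, ‖ξs n x‖ ^ 2 ∂(μs n) ≤ C) →
    Tendsto (fun n => W2 (μs n) μ) atTop (nhds 0) →
    Tendsto (fun n => F (μs n)) atTop (nhds ((phi : EReal))) →
    (∀ f : Ed d → Ed d, Continuous f → HasCompactSupport f →
      Tendsto (fun n => ∫ x, ⟪f x, ξs n x⟫ ∂(μs n)) atTop (nhds (∫ x, ⟪f x, ξ x⟫ ∂μ))) →
    MemLp ξ 2 μ →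
    IsStrongSubdiff F μ ξ ∧ F μ = (phi : EReal)

/-- The operator `L_{A,μ}[v](x) = 2(A v(x) + ∫ y ⟨v(y),x⟩ dμ(y))`. -/
def mobOp (A : Matrix (Fin d) (Fin d) ℝ) (μ : Measure (Ed d)) (v : Ed d → Ed d) :
    Ed d → Ed d := fun x =>
  (EuclideanSpace.equiv (Fin d) ℝ).symm fun k =>
    2 * ((A.mulVec (EuclideanSpace.equiv (Fin d) ℝ (v x))) k + ∫ y, y k * ⟪v y, x⟫ ∂μ)

/-- The invariant space `I_μ` of vector fields with symmetric `∫ x v(x)ᵀ dμ`. -/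
def InInvariant (μ : Measure (Ed d)) (v : Ed d → Ed d) : Prop :=
  MemLp v 2 μ ∧ ∀ i j, ∫ x, x i * v x j ∂μ = ∫ x, x j * v x i ∂μ

/-- The principal inverse of `L_{A,μ}`, given by the explicit Kronecker-product formula. -/
def principalInv (A : Matrix (Fin d) (Fin d) ℝ) (μ : Measure (Ed d)) (w : Ed d → Ed d) :
    Ed d → Ed d := fun x =>
  (EuclideanSpace.equiv (Fin d) ℝ).symm fun k =>
    (1 / 2) * (A⁻¹.mulVec (EuclideanSpace.equiv (Fin d) ℝ (w x))) k
      - (1 / 2) * ∑ i : Fin d, x i *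
          ((((1 : Matrix (Fin d) (Fin d) ℝ) ⊗ₖ (A * A) + covMat μ ⊗ₖ A)⁻¹).mulVec
            (fun q : Fin d × Fin d => ∫ y, y q.1 * w y q.2 ∂μ)) (i, k)

def IsOptW2 (π : Measure (Ed d × Ed d)) (μ ν : Measure (Ed d)) : Prop :=
  IsCoupling π μ ν ∧ ∀ π' : Measure (Ed d × Ed d), IsCoupling π' μ ν →
    (∫ p, ‖p.1 - p.2‖ ^ 2 ∂π) ≤ ∫ p, ‖p.1 - p.2‖ ^ 2 ∂π'

/-- Brenier (quadratic-cost optimal transport) map from `μ` to `ν`. -/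
def IsBrenierMap (μ ν : Measure (Ed d)) (T : Ed d → Ed d) : Prop :=
  AEMeasurable T μ ∧ IsOptW2 (μ.map fun x => (x, T x)) μ ν

/-- Gromov-Monge map: a map inducing an optimal IGW coupling. -/
def IsGMmap (μ ν : Measure (Ed d)) (T : Ed d → Ed d) : Prop :=
  AEMeasurable T μ ∧ IsOptIGW (μ.map fun x => (x, T x)) μ ν

/-- The continuity equation `∂ₜρ + ∇·(ρ v) = 0` on `(a,b) × ℝ^d`, in the distributional sense. -/
def ContEqOn (ρ : ℝ → Measure (Ed d)) (v : ℝ → Ed d → Ed d) (a b : ℝ) : Prop :=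
  ∀ g : ℝ × Ed d → ℝ, ContDiff ℝ (⊤ : ℕ∞) g → HasCompactSupport g →
    (tsupport g ⊆ Ioo a b ×ˢ univ) →
    (∫ t in a..b, ∫ x, deriv (fun s => g (s, x)) t ∂(ρ t)) =
      -∫ t in a..b, ∫ x, ⟪gradient (fun y => g (t, y)) x, v t x⟫ ∂(ρ t)

/-- The IGW Riemannian metric tensor `g_μ(v,w)`. -/
def gTensor (μ : Measure (Ed d)) (v w : Ed d → Ed d) : ℝ :=
  ∫ p, (⟪v p.1, p.2⟫ + ⟪p.1, v p.2⟫) * (⟪w p.1, p.2⟫ + ⟪p.1, w p.2⟫) ∂(μ.prod μ)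

section AuxIGW

variable {d : ℕ}

lemma ed_inner (x y : Ed d) : ⟪x, y⟫ = ∑ i, x i * y i := by
  rw [PiLp.inner_apply]; simp [RCLike.inner_apply]
  exact Finset.sum_congr rfl fun i _ => mul_comm _ _

lemma ed_normsq (x : Ed d) : ‖x‖ ^ 2 = ∑ i, (x i) ^ 2 := by
  rw [EuclideanSpace.norm_eq, Real.sq_sqrt (by positivity)]; simp [sq]

lemma ed_coord_sq_le (x : Ed d) (i : Fin d) : (x i) ^ 2 ≤ ‖x‖ ^ 2 := by
  rw [ed_normsq]
  exact Finset.single_le_sum (f := fun j => (x j)^2) (fun j _ => sq_nonneg _) (Finset.mem_univ i)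

lemma coupling_prob {π : Measure (Ed d × Ed d)} {μ ν : Measure (Ed d)}
    (h : IsCoupling π μ ν) (hμ : IsProbabilityMeasure μ) : IsProbabilityMeasure π := by
  constructor
  have : π.map Prod.fst Set.univ = π Set.univ := by
    rw [Measure.map_apply measurable_fst MeasurableSet.univ]; rfl
  rw [← this, h.1]; exact hμ.measure_univ

lemma marg_fst_integral {π : Measure (Ed d × Ed d)} {μ ν : Measure (Ed d)}
    (h : IsCoupling π μ ν) {g : Ed d → ℝ} (hg : Continuous g) :
    ∫ p, g p.1 ∂π = ∫ x, g x ∂μ := by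
  rw [← h.1, integral_map measurable_fst.aemeasurable hg.aestronglyMeasurable]

lemma marg_snd_integral {π : Measure (Ed d × Ed d)} {μ ν : Measure (Ed d)}
    (h : IsCoupling π μ ν) {g : Ed d → ℝ} (hg : Continuous g) :
    ∫ p, g p.2 ∂π = ∫ x, g x ∂ν := by
  rw [← h.2, integral_map measurable_snd.aemeasurable hg.aestronglyMeasurable]

lemma marg_fst_integrable {π : Measure (Ed d × Ed d)} {μ ν : Measure (Ed d)}
    (h : IsCoupling π μ ν) {g : Ed d → ℝ} (hg : Continuous g) (hi : Integrable g μ) :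
    Integrable (fun p : Ed d × Ed d => g p.1) π := by
  rw [← h.1] at hi
  exact (integrable_map_measure hg.aestronglyMeasurable measurable_fst.aemeasurable).mp hi

lemma marg_snd_integrable {π : Measure (Ed d × Ed d)} {μ ν : Measure (Ed d)}
    (h : IsCoupling π μ ν) {g : Ed d → ℝ} (hg : Continuous g) (hi : Integrable g ν) :
    Integrable (fun p : Ed d × Ed d => g p.2) π := by
  rw [← h.2] at hi
  exact (integrable_map_measure hg.aestronglyMeasurable measurable_snd.aemeasurable).mp hi

lemma contnormsq1 : Continuous (fun p : Ed d × Ed d => ‖p.1‖ ^ 2) := by fun_prop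
lemma contnormsq2 : Continuous (fun p : Ed d × Ed d => ‖p.2‖ ^ 2) := by fun_prop

/-- combined norm bound, integrable under a coupling of P2 measures -/
lemma coupling_norm_integrable {π : Measure (Ed d × Ed d)} {μ ν : Measure (Ed d)}
    (h : IsCoupling π μ ν) (hμ : P2 μ) (hν : P2 ν) :
    Integrable (fun p : Ed d × Ed d => ‖p.1‖ ^ 2 + ‖p.2‖ ^ 2) π :=
  (marg_fst_integrable h (by fun_prop) hμ.2).add (marg_snd_integrable h (by fun_prop) hν.2)

end AuxIGW
section AuxIGW2

variable {d : ℕ}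

lemma igwCost_nonneg (π : Measure (Ed d × Ed d)) : 0 ≤ igwCost π :=
  integral_nonneg fun p => sq_nonneg _

lemma M2_nonneg (μ : Measure (Ed d)) : 0 ≤ M2 μ := integral_nonneg fun x => sq_nonneg _

lemma prod_coupling (μ ν : Measure (Ed d)) [IsProbabilityMeasure μ] [IsProbabilityMeasure ν] :
    IsCoupling (μ.prod ν) μ ν :=
  ⟨by simp [Measure.map_fst_prod], by simp [Measure.map_snd_prod]⟩

lemma normsq_sub_integrable {π : Measure (Ed d × Ed d)} {μ ν : Measure (Ed d)}
    (h : IsCoupling π μ ν) (hμ : P2 μ) (hν : P2 ν) :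
    Integrable (fun p : Ed d × Ed d => ‖p.1 - p.2‖ ^ 2) π := by
  refine (coupling_norm_integrable h hμ hν).const_mul 2 |>.mono' (((continuous_fst.sub continuous_snd).norm.pow 2).aestronglyMeasurable) ?_
  refine Filter.Eventually.of_forall fun p => ?_
  have h1 : ‖p.1 - p.2‖ ≤ ‖p.1‖ + ‖p.2‖ := norm_sub_le _ _
  have h2 : (0:ℝ) ≤ ‖p.1 - p.2‖ := norm_nonneg _
  rw [Real.norm_eq_abs, abs_of_nonneg (by positivity)]
  nlinarith [pow_le_pow_left₀ h2 h1 2, sq_nonneg (‖p.1‖ - ‖p.2‖)]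

lemma igwCost_le_K_mul {π : Measure (Ed d × Ed d)} {μ ν : Measure (Ed d)}
    (h : IsCoupling π μ ν) (hμ : P2 μ) (hν : P2 ν) :
    igwCost π ≤ (2 * M2 μ + 2 * M2 ν) * ∫ p, ‖p.1 - p.2‖ ^ 2 ∂π := by
  haveI := coupling_prob h hμ.1
  have hD : Integrable (fun p : Ed d × Ed d => ‖p.1 - p.2‖ ^ 2) π := normsq_sub_integrable h hμ hν
  have hI1 : Integrable (fun p : Ed d × Ed d => ‖p.1‖ ^ 2) π :=
    marg_fst_integrable h (by fun_prop) hμ.2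
  have hI2 : Integrable (fun p : Ed d × Ed d => ‖p.2‖ ^ 2) π :=
    marg_snd_integrable h (by fun_prop) hν.2
  have hG : Integrable (fun q : (Ed d × Ed d) × (Ed d × Ed d) =>
      2 * (‖q.1.1 - q.1.2‖ ^ 2 * ‖q.2.1‖ ^ 2) + 2 * (‖q.1.2‖ ^ 2 * ‖q.2.1 - q.2.2‖ ^ 2))
      (π.prod π) := ((hD.mul_prod hI1).const_mul 2).add ((hI2.mul_prod hD).const_mul 2)
  have hmono : igwCost π ≤ ∫ q, (2 * (‖q.1.1 - q.1.2‖ ^ 2 * ‖q.2.1‖ ^ 2) +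
      2 * (‖q.1.2‖ ^ 2 * ‖q.2.1 - q.2.2‖ ^ 2)) ∂(π.prod π) := by
    refine integral_mono_of_nonneg (Filter.Eventually.of_forall fun q => sq_nonneg _) hG
      (Filter.Eventually.of_forall fun q => ?_)
    dsimp only
    have key : ⟪q.1.1, q.2.1⟫ - ⟪q.1.2, q.2.2⟫ =
        ⟪q.1.1 - q.1.2, q.2.1⟫ + ⟪q.1.2, q.2.1 - q.2.2⟫ := by
      rw [inner_sub_left, inner_sub_right]; ring
    rw [key]
    have h1 : |⟪q.1.1 - q.1.2, q.2.1⟫| ≤ ‖q.1.1 - q.1.2‖ * ‖q.2.1‖ := abs_real_inner_le_norm _ _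
    have h2 : |⟪q.1.2, q.2.1 - q.2.2⟫| ≤ ‖q.1.2‖ * ‖q.2.1 - q.2.2‖ := abs_real_inner_le_norm _ _
    have h1' : ⟪q.1.1 - q.1.2, q.2.1⟫ ^ 2 ≤ (‖q.1.1 - q.1.2‖ * ‖q.2.1‖) ^ 2 := by
      rw [← sq_abs]; exact pow_le_pow_left₀ (abs_nonneg _) h1 2
    have h2' : ⟪q.1.2, q.2.1 - q.2.2⟫ ^ 2 ≤ (‖q.1.2‖ * ‖q.2.1 - q.2.2‖) ^ 2 := by
      rw [← sq_abs]; exact pow_le_pow_left₀ (abs_nonneg _) h2 2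
    nlinarith [sq_nonneg (⟪q.1.1 - q.1.2, q.2.1⟫ - ⟪q.1.2, q.2.1 - q.2.2⟫), mul_pow (‖q.1.1 - q.1.2‖) (‖q.2.1‖) 2, mul_pow (‖q.1.2‖) (‖q.2.1 - q.2.2‖) 2]
  calc igwCost π ≤ _ := hmono
    _ = 2 * ((∫ p, ‖p.1 - p.2‖ ^ 2 ∂π) * ∫ p, ‖p.1‖ ^ 2 ∂π) +
        2 * ((∫ p, ‖p.2‖ ^ 2 ∂π) * ∫ p, ‖p.1 - p.2‖ ^ 2 ∂π) := by
      have e1 := integral_prod_mul (μ := π) (ν := π)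
        (f := fun p : Ed d × Ed d => ‖p.1 - p.2‖ ^ 2) (g := fun p : Ed d × Ed d => ‖p.1‖ ^ 2)
      have e2 := integral_prod_mul (μ := π) (ν := π)
        (f := fun p : Ed d × Ed d => ‖p.2‖ ^ 2) (g := fun p : Ed d × Ed d => ‖p.1 - p.2‖ ^ 2)
      rw [integral_add ((hD.mul_prod hI1).const_mul 2) ((hI2.mul_prod hD).const_mul 2),
        integral_const_mul, integral_const_mul]
      simp only [e1, e2]
    _ = (2 * M2 μ + 2 * M2 ν) * ∫ p, ‖p.1 - p.2‖ ^ 2 ∂π := by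
      rw [marg_fst_integral h (g := fun x => ‖x‖^2) (by fun_prop),
          marg_snd_integral h (g := fun x => ‖x‖^2) (by fun_prop)]
      show 2 * (_ * M2 μ) + 2 * (M2 ν * _) = _
      ring

lemma part1 (μ ν : Measure (Ed d)) (hμ : P2 μ) (hν : P2 ν) :
    IGW μ ν ≤ Real.sqrt (2 * M2 μ + 2 * M2 ν) * W2 μ ν := by
  haveI := hμ.1; haveI := hν.1
  have hK0 : 0 ≤ 2 * M2 μ + 2 * M2 ν := by
    have := M2_nonneg μ; have := M2_nonneg ν; linarith
  set K := 2 * M2 μ + 2 * M2 ν with hK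
  set A := {c : ℝ | ∃ π : Measure (Ed d × Ed d), IsCoupling π μ ν ∧ c = igwCost π} with hA
  set B := {c : ℝ | ∃ π : Measure (Ed d × Ed d), IsCoupling π μ ν ∧
    c = ∫ p, ‖p.1 - p.2‖ ^ 2 ∂π} with hB
  have hAbdd : BddBelow A := ⟨0, by rintro c ⟨π, hπ, rfl⟩; exact igwCost_nonneg π⟩
  have hBne : B.Nonempty := ⟨_, μ.prod ν, prod_coupling μ ν, rfl⟩
  have key : ∀ c ∈ B, sInf A ≤ K * c := by
    rintro c ⟨π, hπ, rfl⟩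
    exact le_trans (csInf_le hAbdd ⟨π, hπ, rfl⟩) (igwCost_le_K_mul hπ hμ hν)
  have h2 : sInf A ≤ K * sInf B := by
    rcases hK0.eq_or_lt with hKz | hKpos
    · obtain ⟨b, hb⟩ := hBne
      have := key b hb
      rw [← hKz] at this ⊢
      simpa using this
    · have : sInf A / K ≤ sInf B :=
        le_csInf hBne fun b hb => (div_le_iff₀' hKpos).mpr (key b hb)
      calc sInf A = K * (sInf A / K) := by field_simp
        _ ≤ K * sInf B := by exact mul_le_mul_of_nonneg_left this hK0
  show Real.sqrt (sInf A) ≤ Real.sqrt K * Real.sqrt (sInf B)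
  rw [← Real.sqrt_mul hK0]
  exact Real.sqrt_le_sqrt h2

end AuxIGW2
section AuxIGW3

variable {d : ℕ}

instance : OpensMeasurableSpace ((Ed d × Ed d) × Ed d × Ed d) := Prod.opensMeasurableSpace

lemma matMap_apply (O : Matrix (Fin d) (Fin d) ℝ) (x : Ed d) (k : Fin d) :
    matMap O x k = ∑ j, O k j * x j := rfl

lemma matMap_continuous (O : Matrix (Fin d) (Fin d) ℝ) : Continuous (matMap O) := by
  have : Continuous fun (v : Fin d → ℝ) => O.mulVec v := by
    refine continuous_pi fun k => ?_
    show Continuous fun v : Fin d → ℝ => ∑ j, O k j * v j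
    exact continuous_finset_sum _ fun j _ => continuous_const.mul (continuous_apply j)
  exact ((EuclideanSpace.equiv (Fin d) ℝ).symm.continuous).comp
    (this.comp (EuclideanSpace.equiv (Fin d) ℝ).continuous)

lemma mulVec_dot_mulVec (O : Matrix (Fin d) (Fin d) ℝ) (hOT : Oᵀ * O = 1)
    (v w : Fin d → ℝ) : (O.mulVec v) ⬝ᵥ (O.mulVec w) = v ⬝ᵥ w := by
  have h1 : O.mulVec v = Matrix.vecMul v Oᵀ := by
    rw [← Matrix.transpose_transpose O, Matrix.mulVec_transpose, Matrix.transpose_transpose]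
  rw [Matrix.dotProduct_mulVec, h1, Matrix.vecMul_vecMul, hOT, Matrix.vecMul_one]

lemma ortho_inner (O : Matrix (Fin d) (Fin d) ℝ) (hOT : Oᵀ * O = 1) (x y : Ed d) :
    ⟪matMap O x, matMap O y⟫ = ⟪x, y⟫ := by
  rw [ed_inner, ed_inner]
  exact mulVec_dot_mulVec O hOT (fun j => x j) (fun j => y j)

lemma ortho_normsq (O : Matrix (Fin d) (Fin d) ℝ) (hOT : Oᵀ * O = 1) (x : Ed d) :
    ‖matMap O x‖ ^ 2 = ‖x‖ ^ 2 := by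
  rw [← real_inner_self_eq_norm_sq, ← real_inner_self_eq_norm_sq, ortho_inner O hOT]

lemma measurable_F (O : Matrix (Fin d) (Fin d) ℝ) :
    Measurable (fun p : Ed d × Ed d => (p.1, matMap O p.2)) :=
  measurable_fst.prodMk ((matMap_continuous O).measurable.comp measurable_snd)

lemma pihat_coupling {π : Measure (Ed d × Ed d)} {μ ν : Measure (Ed d)}
    (h : IsCoupling π μ ν) (O : Matrix (Fin d) (Fin d) ℝ) :
    IsCoupling (π.map (fun p : Ed d × Ed d => (p.1, matMap O p.2))) μ (matPush O ν) := by
  constructor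
  · rw [Measure.map_map measurable_fst (measurable_F O)]
    exact h.1
  · rw [Measure.map_map measurable_snd (measurable_F O)]
    have : (Prod.snd ∘ fun p : Ed d × Ed d => (p.1, matMap O p.2)) = matMap O ∘ Prod.snd := rfl
    rw [this, ← Measure.map_map (matMap_continuous O).measurable measurable_snd, h.2]
    rfl

lemma pihat_integral {π : Measure (Ed d × Ed d)} (O : Matrix (Fin d) (Fin d) ℝ)
    {g : Ed d × Ed d → ℝ} (hg : Continuous g) :
    ∫ p, g p ∂(π.map (fun p : Ed d × Ed d => (p.1, matMap O p.2))) =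
      ∫ p, g (p.1, matMap O p.2) ∂π :=
  integral_map (measurable_F O).aemeasurable hg.aestronglyMeasurable

lemma cont_igw_integrand :
    Continuous (fun q : (Ed d × Ed d) × (Ed d × Ed d) =>
      (⟪q.1.1, q.2.1⟫ - ⟪q.1.2, q.2.2⟫) ^ 2) := by
  exact ((continuous_fst.fst.inner continuous_snd.fst).sub
    (continuous_fst.snd.inner continuous_snd.snd)).pow 2

lemma igwCost_pihat {π : Measure (Ed d × Ed d)} [IsProbabilityMeasure π]
    (O : Matrix (Fin d) (Fin d) ℝ) (hOT : Oᵀ * O = 1) :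
    igwCost (π.map (fun p : Ed d × Ed d => (p.1, matMap O p.2))) = igwCost π := by
  set F := fun p : Ed d × Ed d => (p.1, matMap O p.2) with hF
  have hprod : (π.map F).prod (π.map F) = (π.prod π).map (Prod.map F F) :=
    Measure.map_prod_map _ _ (measurable_F O) (measurable_F O)
  show (∫ q, (⟪q.1.1, q.2.1⟫ - ⟪q.1.2, q.2.2⟫) ^ 2 ∂(π.map F).prod (π.map F)) = _
  rw [hprod, integral_map ((measurable_F O).prodMap (measurable_F O)).aemeasurable
    cont_igw_integrand.aestronglyMeasurable]
  refine integral_congr_ae (Filter.Eventually.of_forall fun q => ?_)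
  show (⟪q.1.1, q.2.1⟫ - ⟪matMap O q.1.2, matMap O q.2.2⟫) ^ 2 = _
  rw [ortho_inner O hOT]

end AuxIGW3
section AuxIGW4

variable {d : ℕ}

lemma ed_abs_coord_le (x : Ed d) (i : Fin d) : |x i| ≤ ‖x‖ := by
  have h := ed_coord_sq_le x i
  have := Real.sqrt_le_sqrt h
  rwa [Real.sqrt_sq_eq_abs, Real.sqrt_sq (norm_nonneg x)] at this

lemma integ_dominated {π : Measure (Ed d × Ed d)}
    (hInt : Integrable (fun p : Ed d × Ed d => ‖p.1‖ ^ 2 + ‖p.2‖ ^ 2) π)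
    {f : Ed d × Ed d → ℝ} (hf : Continuous f)
    (hb : ∀ p, |f p| ≤ 2 * (‖p.1‖ ^ 2 + ‖p.2‖ ^ 2)) : Integrable f π :=
  (hInt.const_mul 2).mono' hf.aestronglyMeasurable (Filter.Eventually.of_forall fun p => by
    rw [Real.norm_eq_abs]; exact hb p)

lemma coord_pair_integrable {π : Measure (Ed d × Ed d)}
    (hInt : Integrable (fun p : Ed d × Ed d => ‖p.1‖ ^ 2 + ‖p.2‖ ^ 2) π)
    {φ ψ : Ed d × Ed d → Ed d} (hφ : Continuous φ) (hψ : Continuous ψ)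
    (hbφ : ∀ p, ‖φ p‖ ^ 2 ≤ 2 * (‖p.1‖ ^ 2 + ‖p.2‖ ^ 2))
    (hbψ : ∀ p, ‖ψ p‖ ^ 2 ≤ 2 * (‖p.1‖ ^ 2 + ‖p.2‖ ^ 2)) (i j : Fin d) :
    Integrable (fun p => φ p i * ψ p j) π := by
  refine integ_dominated hInt (by fun_prop) fun p => ?_
  have h1 : |φ p i| ≤ ‖φ p‖ := ed_abs_coord_le _ _
  have h2 : |ψ p j| ≤ ‖ψ p‖ := ed_abs_coord_le _ _
  have := hbφ p; have := hbψ p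
  rw [abs_mul]
  nlinarith [abs_nonneg (φ p i), abs_nonneg (ψ p j), sq_abs (φ p i), sq_abs (ψ p j),
    sq_nonneg (|φ p i| - |ψ p j|), norm_nonneg (φ p), norm_nonneg (ψ p),
    mul_le_mul h1 h2 (abs_nonneg _) (norm_nonneg _)]

lemma expand_pair {π : Measure (Ed d × Ed d)}
    (hInt : Integrable (fun p : Ed d × Ed d => ‖p.1‖ ^ 2 + ‖p.2‖ ^ 2) π)
    {φ ψ : Ed d × Ed d → Ed d} (hφ : Continuous φ) (hψ : Continuous ψ)
    (hbφ : ∀ p, ‖φ p‖ ^ 2 ≤ 2 * (‖p.1‖ ^ 2 + ‖p.2‖ ^ 2))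
    (hbψ : ∀ p, ‖ψ p‖ ^ 2 ≤ 2 * (‖p.1‖ ^ 2 + ‖p.2‖ ^ 2)) (a b : Ed d) :
    ∫ p, ⟪φ p, a⟫ * ⟪ψ p, b⟫ ∂π =
      ∑ i, ∑ j, a i * b j * ∫ p, φ p i * ψ p j ∂π := by
  have hterm : ∀ i j : Fin d, Integrable (fun p => a i * b j * (φ p i * ψ p j)) π :=
    fun i j => (coord_pair_integrable hInt hφ hψ hbφ hbψ i j).const_mul _
  have key : ∀ p, ⟪φ p, a⟫ * ⟪ψ p, b⟫ = ∑ i, ∑ j, a i * b j * (φ p i * ψ p j) := by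
    intro p
    rw [ed_inner, ed_inner, Finset.sum_mul_sum]
    exact Finset.sum_congr rfl fun i _ => Finset.sum_congr rfl fun j _ => by ring
  rw [integral_congr_ae (Filter.Eventually.of_forall fun p => key p)]
  rw [integral_finset_sum _ (fun i _ => integrable_finset_sum _ (fun j _ => hterm i j))]
  exact Finset.sum_congr rfl fun i _ => by
    rw [integral_finset_sum _ (fun j _ => hterm i j)]
    exact Finset.sum_congr rfl fun j _ => integral_const_mul _ _

lemma coord_single_integrable {μ : Measure (Ed d)}
    (hInt : Integrable (fun x : Ed d => ‖x‖ ^ 2) μ) (i j : Fin d) :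
    Integrable (fun x => x i * x j) μ := by
  refine hInt.mono' (((PiLp.continuous_apply (p := 2) (β := fun _ : Fin d => ℝ) i).mul (PiLp.continuous_apply (p := 2) (β := fun _ : Fin d => ℝ) j)).aestronglyMeasurable) (Filter.Eventually.of_forall fun x => ?_)
  rw [Real.norm_eq_abs, abs_mul]
  have h1 := ed_abs_coord_le x i
  have h2 := ed_abs_coord_le x j
  nlinarith [abs_nonneg (x i), abs_nonneg (x j), sq_abs (x i), sq_abs (x j),
    sq_nonneg (|x i| - |x j|), ed_coord_sq_le x i, ed_coord_sq_le x j]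

lemma expand_single {μ : Measure (Ed d)}
    (hInt : Integrable (fun x : Ed d => ‖x‖ ^ 2) μ) (a b : Ed d) :
    ∫ x, ⟪x, a⟫ * ⟪x, b⟫ ∂μ = ∑ i, ∑ j, a i * b j * ∫ x, x i * x j ∂μ := by
  have hterm : ∀ i j : Fin d, Integrable (fun x => a i * b j * (x i * x j)) μ :=
    fun i j => (coord_single_integrable hInt i j).const_mul _
  have key : ∀ x : Ed d, ⟪x, a⟫ * ⟪x, b⟫ = ∑ i, ∑ j, a i * b j * (x i * x j) := by
    intro x
    rw [ed_inner, ed_inner, Finset.sum_mul_sum]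
    exact Finset.sum_congr rfl fun i _ => Finset.sum_congr rfl fun j _ => by ring
  rw [integral_congr_ae (Filter.Eventually.of_forall fun x => key x)]
  rw [integral_finset_sum _ (fun i _ => integrable_finset_sum _ (fun j _ => hterm i j))]
  exact Finset.sum_congr rfl fun i _ => by
    rw [integral_finset_sum _ (fun j _ => hterm i j)]
    exact Finset.sum_congr rfl fun j _ => integral_const_mul _ _

lemma rayleigh_covMat {μ : Measure (Ed d)}
    (hInt : Integrable (fun x : Ed d => ‖x‖ ^ 2) μ) (v : Fin d → ℝ) :
    ∑ i, v i * (covMat μ).mulVec v i = ∫ x, (∑ i, v i * x i) ^ 2 ∂μ := by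
  set a : Ed d := (EuclideanSpace.equiv (Fin d) ℝ).symm v with ha
  have hav : ∀ i, a i = v i := fun i => rfl
  have key : ∀ x : Ed d, (∑ i, v i * x i) ^ 2 = ⟪x, a⟫ * ⟪x, a⟫ := by
    intro x
    rw [ed_inner, sq]
    congr 1 <;> exact Finset.sum_congr rfl fun i _ => by rw [hav]; ring
  rw [integral_congr_ae (Filter.Eventually.of_forall fun x => key x), expand_single hInt a a]
  refine Finset.sum_congr rfl fun i _ => ?_
  rw [Matrix.mulVec, dotProduct, Finset.mul_sum]
  refine Finset.sum_congr rfl fun j _ => ?_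
  simp only [hav]
  have hcc : (covMat μ) i j = ∫ x, x i * x j ∂μ := rfl
  rw [hcc]
  ring

lemma rayleigh_nonneg {μ : Measure (Ed d)}
    (hInt : Integrable (fun x : Ed d => ‖x‖ ^ 2) μ) (v : Fin d → ℝ) :
    0 ≤ ∑ i, v i * (covMat μ).mulVec v i := by
  rw [rayleigh_covMat hInt v]
  exact integral_nonneg fun x => sq_nonneg _

lemma lambdaMin_bddBelow {μ : Measure (Ed d)}
    (hInt : Integrable (fun x : Ed d => ‖x‖ ^ 2) μ) :
    BddBelow {r : ℝ | ∃ v : Fin d → ℝ, ∑ i, v i ^ 2 = 1 ∧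
      r = ∑ i, v i * (covMat μ).mulVec v i} := by
  refine ⟨0, ?_⟩
  rintro r ⟨v, hv, rfl⟩
  exact rayleigh_nonneg hInt v

lemma lambdaMin_le_rayleigh {μ : Measure (Ed d)}
    (hInt : Integrable (fun x : Ed d => ‖x‖ ^ 2) μ) (v : Fin d → ℝ)
    (hv : ∑ i, v i ^ 2 = 1) :
    lambdaMin (covMat μ) ≤ ∫ x, (∑ i, v i * x i) ^ 2 ∂μ := by
  rw [← rayleigh_covMat hInt v]
  exact csInf_le (lambdaMin_bddBelow hInt) ⟨v, hv, rfl⟩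

lemma lambdaMin_nonneg {μ : Measure (Ed d)}
    (hInt : Integrable (fun x : Ed d => ‖x‖ ^ 2) μ) (hd : 0 < d) :
    0 ≤ lambdaMin (covMat μ) := by
  refine le_csInf ⟨∑ i, (fun k => if k = (⟨0, hd⟩ : Fin d) then (1:ℝ) else 0) i *
    (covMat μ).mulVec _ i, (fun k => if k = (⟨0, hd⟩ : Fin d) then (1:ℝ) else 0), ?_, rfl⟩ ?_
  · have : ∀ i : Fin d, ((if i = (⟨0, hd⟩ : Fin d) then (1:ℝ) else 0)) ^ 2 =
        if i = (⟨0, hd⟩ : Fin d) then (1:ℝ) else 0 := fun i => by split <;> simp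
    simp only [this, Finset.sum_ite_eq', Finset.mem_univ, if_true]
  · rintro r ⟨v, hv, rfl⟩
    exact rayleigh_nonneg hInt v

end AuxIGW4
section AuxIGW5

variable {d : ℕ}

lemma perk_ineq (lu lv u v n : ℝ) (hlu0 : 0 ≤ lu) (hlv0 : 0 ≤ lv) (hlu : lu ≤ u) (hlv : lv ≤ v)
    (hn0 : 0 ≤ n) (hn : n ≤ (u + v) / 2) :
    Real.sqrt ((lu ^ 2 + lv ^ 2) / 2) * (u + v - 2 * n) ≤
      (u - n) ^ 2 + (v - n) ^ 2 + 2 * n * (u + v - 2 * n) := by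
  have hu0 : 0 ≤ u := le_trans hlu0 hlu
  have hv0 : 0 ≤ v := le_trans hlv0 hlv
  set q' := Real.sqrt ((u ^ 2 + v ^ 2) / 2) with hq'
  have hq'0 : 0 ≤ q' := Real.sqrt_nonneg _
  have hq'sq : q' ^ 2 = (u ^ 2 + v ^ 2) / 2 := Real.sq_sqrt (by positivity)
  have hq : Real.sqrt ((lu ^ 2 + lv ^ 2) / 2) ≤ q' := by
    apply Real.sqrt_le_sqrt
    have h1 : lu ^ 2 ≤ u ^ 2 := by nlinarith
    have h2 : lv ^ 2 ≤ v ^ 2 := by nlinarith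
    linarith
  have hq0 : 0 ≤ Real.sqrt ((lu ^ 2 + lv ^ 2) / 2) := Real.sqrt_nonneg _
  have huv : (u + v) / 2 ≤ q' := by
    rw [hq']
    rw [show ((u + v) / 2 : ℝ) = Real.sqrt (((u+v)/2)^2) from (Real.sqrt_sq (by linarith)).symm]
    apply Real.sqrt_le_sqrt
    nlinarith [sq_nonneg (u - v)]
  have hnq' : n ≤ q' := le_trans hn huv
  have hs0 : 0 ≤ u + v - 2 * n := by linarith
  nlinarith [mul_nonneg hq'0 (by linarith : (0:ℝ) ≤ 2 * q' - (u + v)),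
    mul_nonneg hn0 (by linarith : (0:ℝ) ≤ q' - n),
    mul_nonneg (sub_nonneg.2 hq) hs0, hq'sq]

lemma inner_pair_integrable {π : Measure (Ed d × Ed d)}
    (hInt : Integrable (fun p : Ed d × Ed d => ‖p.1‖ ^ 2 + ‖p.2‖ ^ 2) π)
    {h₁ h₂ : Ed d × Ed d → ℝ} (hc₁ : Continuous h₁) (hc₂ : Continuous h₂)
    (hb₁ : ∀ p, |h₁ p| ≤ ‖p.1‖ + ‖p.2‖) (hb₂ : ∀ p, |h₂ p| ≤ ‖p.1‖ + ‖p.2‖) :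
    Integrable (fun p => h₁ p * h₂ p) π := by
  refine integ_dominated hInt (hc₁.mul hc₂) fun p => ?_
  rw [abs_mul]
  nlinarith [hb₁ p, hb₂ p, abs_nonneg (h₁ p), abs_nonneg (h₂ p), norm_nonneg p.1,
    norm_nonneg p.2, sq_nonneg (‖p.1‖ - ‖p.2‖),
    mul_le_mul (hb₁ p) (hb₂ p) (abs_nonneg _) (by positivity)]

lemma abs_inner_fst_le (a : Ed d) (ha : ‖a‖ = 1) (p : Ed d × Ed d) :
    |⟪p.1, a⟫| ≤ ‖p.1‖ + ‖p.2‖ := by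
  calc |⟪p.1, a⟫| ≤ ‖p.1‖ * ‖a‖ := abs_real_inner_le_norm _ _
    _ = ‖p.1‖ := by rw [ha, mul_one]
    _ ≤ _ := by nlinarith [norm_nonneg p.2]

lemma abs_inner_snd_le (a : Ed d) (ha : ‖a‖ = 1) (p : Ed d × Ed d) :
    |⟪p.2, a⟫| ≤ ‖p.1‖ + ‖p.2‖ := by
  calc |⟪p.2, a⟫| ≤ ‖p.2‖ * ‖a‖ := abs_real_inner_le_norm _ _
    _ = ‖p.2‖ := by rw [ha, mul_one]
    _ ≤ _ := by nlinarith [norm_nonneg p.1]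

lemma parseval_inner (w : OrthonormalBasis (Fin d) ℝ (Ed d)) (x y : Ed d) :
    ⟪x, y⟫ = ∑ k, ⟪x, w k⟫ * ⟪y, w k⟫ := by
  rw [← w.sum_inner_mul_inner x y]
  exact Finset.sum_congr rfl fun k _ => by rw [real_inner_comm (w k) y]

lemma igwCost_expand {π : Measure (Ed d × Ed d)} [IsProbabilityMeasure π]
    (hInt : Integrable (fun p : Ed d × Ed d => ‖p.1‖ ^ 2 + ‖p.2‖ ^ 2) π)
    (w : OrthonormalBasis (Fin d) ℝ (Ed d)) :
    igwCost π = ∑ k, ∑ l,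
      ((∫ p, ⟪p.1, w k⟫ * ⟪p.1, w l⟫ ∂π) ^ 2 + (∫ p, ⟪p.2, w k⟫ * ⟪p.2, w l⟫ ∂π) ^ 2
        - (∫ p, ⟪p.1, w k⟫ * ⟪p.2, w l⟫ ∂π) ^ 2 - (∫ p, ⟪p.1, w l⟫ * ⟪p.2, w k⟫ ∂π) ^ 2) := by
  set f : Fin d → (Ed d × Ed d) → ℝ := fun k p => ⟪p.1, w k⟫ with hf
  set g : Fin d → (Ed d × Ed d) → ℝ := fun k p => ⟪p.2, w k⟫ with hg
  have hfc : ∀ k, Continuous (f k) := fun k => continuous_fst.inner continuous_const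
  have hgc : ∀ k, Continuous (g k) := fun k => continuous_snd.inner continuous_const
  have hwn : ∀ k, ‖w k‖ = 1 := fun k => w.orthonormal.1 k
  have hfb : ∀ k p, |f k p| ≤ ‖p.1‖ + ‖p.2‖ := fun k p => abs_inner_fst_le _ (hwn k) p
  have hgb : ∀ k p, |g k p| ≤ ‖p.1‖ + ‖p.2‖ := fun k p => abs_inner_snd_le _ (hwn k) p
  have hff : ∀ k l, Integrable (fun p => f k p * f l p) π :=
    fun k l => inner_pair_integrable hInt (hfc k) (hfc l) (hfb k) (hfb l)
  have hfg : ∀ k l, Integrable (fun p => f k p * g l p) π :=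
    fun k l => inner_pair_integrable hInt (hfc k) (hgc l) (hfb k) (hgb l)
  have hgf : ∀ k l, Integrable (fun p => g k p * f l p) π :=
    fun k l => inner_pair_integrable hInt (hgc k) (hfc l) (hgb k) (hfb l)
  have hgg : ∀ k l, Integrable (fun p => g k p * g l p) π :=
    fun k l => inner_pair_integrable hInt (hgc k) (hgc l) (hgb k) (hgb l)
  have e : ∀ k l : Fin d, (fun q : (Ed d × Ed d) × (Ed d × Ed d) =>
      (f k q.1 * f k q.2 - g k q.1 * g k q.2) * (f l q.1 * f l q.2 - g l q.1 * g l q.2)) =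
      fun q => (f k q.1 * f l q.1) * (f k q.2 * f l q.2)
        - (f k q.1 * g l q.1) * (f k q.2 * g l q.2)
        - (g k q.1 * f l q.1) * (g k q.2 * f l q.2)
        + (g k q.1 * g l q.1) * (g k q.2 * g l q.2) := by
    intro k l; funext q; ring
  have hterm : ∀ k l : Fin d, Integrable (fun q : (Ed d × Ed d) × (Ed d × Ed d) =>
      (f k q.1 * f k q.2 - g k q.1 * g k q.2) * (f l q.1 * f l q.2 - g l q.1 * g l q.2))
      (π.prod π) := by
    intro k l
    rw [e k l]
    exact ((((hff k l).mul_prod (hff k l)).sub ((hfg k l).mul_prod (hfg k l))).sub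
      ((hgf k l).mul_prod (hgf k l))).add ((hgg k l).mul_prod (hgg k l))
  have step1 : igwCost π = ∫ q, (∑ k, (f k q.1 * f k q.2 - g k q.1 * g k q.2)) ^ 2
      ∂(π.prod π) := by
    refine integral_congr_ae (Filter.Eventually.of_forall fun q => ?_)
    show (⟪q.1.1, q.2.1⟫ - ⟪q.1.2, q.2.2⟫) ^ 2 = _
    simp only [hf, hg]
    rw [parseval_inner w q.1.1 q.2.1, parseval_inner w q.1.2 q.2.2, ← Finset.sum_sub_distrib]
  rw [step1]
  have step2 : ∀ q : (Ed d × Ed d) × (Ed d × Ed d),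
      (∑ k, (f k q.1 * f k q.2 - g k q.1 * g k q.2)) ^ 2 =
      ∑ k, ∑ l, (f k q.1 * f k q.2 - g k q.1 * g k q.2) *
        (f l q.1 * f l q.2 - g l q.1 * g l q.2) := by
    intro q; rw [sq, Finset.sum_mul_sum]
  rw [integral_congr_ae (Filter.Eventually.of_forall fun q => step2 q)]
  rw [integral_finset_sum _ (fun k _ => integrable_finset_sum _ (fun l _ => hterm k l))]
  refine Finset.sum_congr rfl fun k _ => ?_
  rw [integral_finset_sum _ (fun l _ => hterm k l)]
  refine Finset.sum_congr rfl fun l _ => ?_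
  rw [e k l]
  have h1 : Integrable (fun q : (Ed d × Ed d) × (Ed d × Ed d) =>
      (f k q.1 * f l q.1) * (f k q.2 * f l q.2)) (π.prod π) := (hff k l).mul_prod (hff k l)
  have h2 : Integrable (fun q : (Ed d × Ed d) × (Ed d × Ed d) =>
      (f k q.1 * g l q.1) * (f k q.2 * g l q.2)) (π.prod π) := (hfg k l).mul_prod (hfg k l)
  have h3 : Integrable (fun q : (Ed d × Ed d) × (Ed d × Ed d) =>
      (g k q.1 * f l q.1) * (g k q.2 * f l q.2)) (π.prod π) := (hgf k l).mul_prod (hgf k l)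
  have h4 : Integrable (fun q : (Ed d × Ed d) × (Ed d × Ed d) =>
      (g k q.1 * g l q.1) * (g k q.2 * g l q.2)) (π.prod π) := (hgg k l).mul_prod (hgg k l)
  have h12 : Integrable (fun q : (Ed d × Ed d) × (Ed d × Ed d) =>
      (f k q.1 * f l q.1) * (f k q.2 * f l q.2)
        - (f k q.1 * g l q.1) * (f k q.2 * g l q.2)) (π.prod π) := h1.sub h2
  have h123 : Integrable (fun q : (Ed d × Ed d) × (Ed d × Ed d) =>
      (f k q.1 * f l q.1) * (f k q.2 * f l q.2)
        - (f k q.1 * g l q.1) * (f k q.2 * g l q.2)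
        - (g k q.1 * f l q.1) * (g k q.2 * f l q.2)) (π.prod π) := h12.sub h3
  rw [integral_add h123 h4, integral_sub h12 h3, integral_sub h1 h2]
  have e1 := integral_prod_mul (μ := π) (ν := π) (f := fun p => f k p * f l p)
    (g := fun p => f k p * f l p)
  have e2 := integral_prod_mul (μ := π) (ν := π) (f := fun p => f k p * g l p)
    (g := fun p => f k p * g l p)
  have e3 := integral_prod_mul (μ := π) (ν := π) (f := fun p => g k p * f l p)
    (g := fun p => g k p * f l p)
  have e4 := integral_prod_mul (μ := π) (ν := π) (f := fun p => g k p * g l p)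
    (g := fun p => g k p * g l p)
  simp only [e1, e2, e3, e4]
  have e5 : ∫ p, g k p * f l p ∂π = ∫ p, f l p * g k p ∂π :=
    integral_congr_ae (Filter.Eventually.of_forall fun p => mul_comm _ _)
  rw [e5]
  ring

end AuxIGW5
section AuxIGW6

variable {d : ℕ}

lemma ed_sub_apply (x y : Ed d) (i : Fin d) : (x - y) i = x i - y i := rfl

lemma fst_norm_bound (p : Ed d × Ed d) : ‖p.1‖ ^ 2 ≤ 2 * (‖p.1‖ ^ 2 + ‖p.2‖ ^ 2) := by
  nlinarith [sq_nonneg ‖p.1‖, sq_nonneg ‖p.2‖]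

lemma snd_norm_bound (p : Ed d × Ed d) : ‖p.2‖ ^ 2 ≤ 2 * (‖p.1‖ ^ 2 + ‖p.2‖ ^ 2) := by
  nlinarith [sq_nonneg ‖p.1‖, sq_nonneg ‖p.2‖]

lemma sub_norm_bound (p : Ed d × Ed d) : ‖p.1 - p.2‖ ^ 2 ≤ 2 * (‖p.1‖ ^ 2 + ‖p.2‖ ^ 2) := by
  have h := norm_sub_le p.1 p.2
  nlinarith [norm_nonneg p.1, norm_nonneg p.2, norm_nonneg (p.1 - p.2),
    sq_nonneg (‖p.1‖ - ‖p.2‖)]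

lemma crossCov_pihat {π : Measure (Ed d × Ed d)}
    (hInt : Integrable (fun p : Ed d × Ed d => ‖p.1‖ ^ 2 + ‖p.2‖ ^ 2) π)
    (O : Matrix (Fin d) (Fin d) ℝ) :
    crossCov (π.map (fun p : Ed d × Ed d => (p.1, matMap O p.2))) = crossCov π * Oᵀ := by
  ext i j
  show (∫ p, p.1 i * p.2 j ∂(π.map (fun p : Ed d × Ed d => (p.1, matMap O p.2)))) = _
  rw [pihat_integral O (g := fun p => p.1 i * p.2 j)
    (((PiLp.continuous_apply (p := 2) (β := fun _ : Fin d => ℝ) i).comp continuous_fst).mul ((PiLp.continuous_apply (p := 2) (β := fun _ : Fin d => ℝ) j).comp continuous_snd))]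
  have e : ∀ p : Ed d × Ed d, p.1 i * (matMap O p.2) j = ∑ m, O j m * (p.1 i * p.2 m) := by
    intro p
    rw [matMap_apply, Finset.mul_sum]
    exact Finset.sum_congr rfl fun m _ => by ring
  rw [integral_congr_ae (Filter.Eventually.of_forall fun p => e p)]
  rw [integral_finset_sum _ (fun m _ => (coord_pair_integrable hInt continuous_fst
    continuous_snd fst_norm_bound snd_norm_bound i m).const_mul _)]
  rw [Matrix.mul_apply]
  refine Finset.sum_congr rfl fun m _ => ?_
  rw [integral_const_mul, Matrix.transpose_apply]
  have : (crossCov π) i m = ∫ p, p.1 i * p.2 m ∂π := rfl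
  rw [this]
  ring

lemma N_eq_PLPT {π : Measure (Ed d × Ed d)}
    (hInt : Integrable (fun p : Ed d × Ed d => ‖p.1‖ ^ 2 + ‖p.2‖ ^ 2) π)
    {P Q L : Matrix (Fin d) (Fin d) ℝ} (hQ : IsOrthoMat Q)
    (hM : crossCov π = P * L * Qᵀ) :
    crossCov (π.map (fun p : Ed d × Ed d => (p.1, matMap (P * Qᵀ) p.2))) = P * L * Pᵀ := by
  rw [crossCov_pihat hInt, hM, Matrix.transpose_mul, Matrix.transpose_transpose]
  have hQ' : Qᵀ * Q = 1 := mul_eq_one_comm.mp hQ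
  calc P * L * Qᵀ * (Q * Pᵀ) = P * L * (Qᵀ * (Q * Pᵀ)) := by
        rw [Matrix.mul_assoc (P * L) Qᵀ (Q * Pᵀ)]
    _ = P * L * Pᵀ := by rw [← Matrix.mul_assoc Qᵀ Q Pᵀ, hQ', Matrix.one_mul]

lemma PLPT_apply {P L : Matrix (Fin d) (Fin d) ℝ} (hLoff : ∀ i j, i ≠ j → L i j = 0)
    (i j : Fin d) : (P * L * Pᵀ) i j = ∑ m, L m m * (P i m * P j m) := by
  have hL : L = Matrix.diagonal (fun m => L m m) := by
    ext a b
    by_cases h : a = b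
    · subst h; simp [Matrix.diagonal]
    · simp [Matrix.diagonal, h, hLoff a b h]
  conv_lhs => rw [hL]
  rw [Matrix.mul_apply]
  refine Finset.sum_congr rfl fun m _ => ?_
  rw [Matrix.mul_diagonal, Matrix.transpose_apply]
  ring

lemma bilinear_PLPT {P L : Matrix (Fin d) (Fin d) ℝ} (hLoff : ∀ i j, i ≠ j → L i j = 0)
    (a b : Fin d → ℝ) :
    ∑ i, ∑ j, a i * b j * (P * L * Pᵀ) i j =
      ∑ m, L m m * ((∑ i, a i * P i m) * (∑ j, b j * P j m)) := by
  have step1 : ∀ i j : Fin d, a i * b j * (P * L * Pᵀ) i j =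
      ∑ m, L m m * (a i * P i m) * (b j * P j m) := by
    intro i j
    rw [PLPT_apply hLoff, Finset.mul_sum]
    exact Finset.sum_congr rfl fun m _ => by ring
  simp only [step1]
  have hswap : (∑ i, ∑ j, ∑ m, L m m * (a i * P i m) * (b j * P j m)) =
      ∑ m, ∑ i, ∑ j, L m m * (a i * P i m) * (b j * P j m) := by
    calc (∑ i, ∑ j, ∑ m, L m m * (a i * P i m) * (b j * P j m))
        = ∑ i, ∑ m, ∑ j, L m m * (a i * P i m) * (b j * P j m) :=
          Finset.sum_congr rfl fun i _ => Finset.sum_comm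
      _ = ∑ m, ∑ i, ∑ j, L m m * (a i * P i m) * (b j * P j m) := Finset.sum_comm
  rw [hswap]
  refine Finset.sum_congr rfl fun m _ => ?_
  rw [Finset.sum_mul_sum, Finset.mul_sum]
  refine Finset.sum_congr rfl fun i _ => ?_
  rw [Finset.mul_sum]
  exact Finset.sum_congr rfl fun j _ => by ring

end AuxIGW6
section AuxIGW7

variable {d : ℕ}

lemma part2 (μ ν : Measure (Ed d)) (hμ : P2 μ) (hν : P2 ν)
    (O : Matrix (Fin d) (Fin d) ℝ) (hO : O ∈ OSet μ ν) :
    ((1 / 2) * (lambdaMin (covMat μ) ^ 2 + lambdaMin (covMat ν) ^ 2)) ^ ((1 : ℝ) / 4) *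
        W2 μ (matPush O ν) ≤ IGW μ ν := by
  obtain ⟨π, P, Q, L, hopt, hP, hQ, hLoff, hLdiag, hM, hOPQ⟩ := hO
  subst hOPQ
  have hcoup := hopt.1
  haveI hPμ : IsProbabilityMeasure μ := hμ.1
  haveI hPν : IsProbabilityMeasure ν := hν.1
  haveI hπP : IsProbabilityMeasure π := coupling_prob hcoup hμ.1
  have hIGW_ge : Real.sqrt (igwCost π) ≤ IGW μ ν := by
    show Real.sqrt (igwCost π) ≤ Real.sqrt (sInf _)
    apply Real.sqrt_le_sqrt
    exact le_csInf ⟨igwCost π, π, hcoup, rfl⟩ (by rintro c ⟨π', hπ', rfl⟩; exact hopt.2 π' hπ')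
  rcases Nat.eq_zero_or_pos d with hd0 | hd
  · subst hd0
    have hlm : ∀ κ : Measure (Ed 0), lambdaMin (covMat κ) = 0 := by
      intro κ
      have he : {r : ℝ | ∃ v : Fin 0 → ℝ, ∑ i, v i ^ 2 = 1 ∧
          r = ∑ i, v i * (covMat κ).mulVec v i} = ∅ := by
        ext r; simp
      rw [lambdaMin, he, Real.sInf_empty]
    rw [hlm μ, hlm ν]
    have h0 : ((1 / 2) * ((0:ℝ) ^ 2 + 0 ^ 2)) ^ ((1 : ℝ) / 4) = 0 := by
      rw [show ((1 / 2) * ((0:ℝ) ^ 2 + 0 ^ 2)) = 0 by norm_num]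
      exact Real.zero_rpow (by norm_num)
    rw [h0, zero_mul]
    exact le_trans (Real.sqrt_nonneg _) hIGW_ge
  -- main case
  have hOO : (P * Qᵀ) * (P * Qᵀ)ᵀ = 1 := by
    rw [Matrix.transpose_mul, Matrix.transpose_transpose]
    have hQ' : Qᵀ * Q = 1 := mul_eq_one_comm.mp hQ
    calc P * Qᵀ * (Q * Pᵀ) = P * (Qᵀ * (Q * Pᵀ)) := by rw [Matrix.mul_assoc]
      _ = P * Pᵀ := by rw [← Matrix.mul_assoc Qᵀ Q Pᵀ, hQ', Matrix.one_mul]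
      _ = 1 := hP
  have hOT : (P * Qᵀ)ᵀ * (P * Qᵀ) = 1 := mul_eq_one_comm.mp hOO
  have hIntπ : Integrable (fun p : Ed d × Ed d => ‖p.1‖ ^ 2 + ‖p.2‖ ^ 2) π :=
    coupling_norm_integrable hcoup hμ hν
  set pih := π.map (fun p : Ed d × Ed d => (p.1, matMap (P * Qᵀ) p.2)) with hpih
  have hcoup2 : IsCoupling pih μ (matPush (P * Qᵀ) ν) := pihat_coupling hcoup _
  have hν2 : P2 (matPush (P * Qᵀ) ν) := by
    constructor
    · exact Measure.isProbabilityMeasure_map (matMap_continuous _).measurable.aemeasurable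
    · show Integrable _ (ν.map (matMap (P * Qᵀ)))
      refine (integrable_map_measure ((continuous_norm.pow 2).aestronglyMeasurable)
        (matMap_continuous _).measurable.aemeasurable).mpr ?_
      have e : ((fun x : Ed d => ‖x‖ ^ 2) ∘ matMap (P * Qᵀ)) = fun y : Ed d => ‖y‖ ^ 2 :=
        funext fun y => ortho_normsq _ hOT y
      exact hν.2.congr (Filter.Eventually.of_forall fun y => (ortho_normsq _ hOT y).symm)
  haveI : IsProbabilityMeasure pih := coupling_prob hcoup2 hμ.1
  have hInt : Integrable (fun p : Ed d × Ed d => ‖p.1‖ ^ 2 + ‖p.2‖ ^ 2) pih :=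
    coupling_norm_integrable hcoup2 hμ hν2
  -- second-moment matrix of the displacement and its eigenbasis
  set SM : Matrix (Fin d) (Fin d) ℝ :=
    Matrix.of (fun i j => ∫ p, (p.1 i - p.2 i) * (p.1 j - p.2 j) ∂pih) with hSMdef
  have hherm : SM.IsHermitian := by
    show SMᴴ = SM
    ext i j
    show star (SM j i) = SM i j
    rw [star_trivial]
    show (∫ p, (p.1 j - p.2 j) * (p.1 i - p.2 i) ∂pih) = ∫ p, (p.1 i - p.2 i) * (p.1 j - p.2 j) ∂pih
    exact integral_congr_ae (Filter.Eventually.of_forall fun p => mul_comm _ _)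
  set w := hherm.eigenvectorBasis with hwdef
  have hwn : ∀ k, ‖w k‖ = 1 := fun k => w.orthonormal.1 k
  have hworth : ∀ k l, k ≠ l → ⟪w k, w l⟫ = 0 := fun k l h => w.orthonormal.2 h
  -- basic bounds and continuity
  have hwb1 : ∀ (k : Fin d) (p : Ed d × Ed d), |⟪p.1, w k⟫| ≤ ‖p.1‖ + ‖p.2‖ :=
    fun k p => abs_inner_fst_le _ (hwn k) p
  have hwb2 : ∀ (k : Fin d) (p : Ed d × Ed d), |⟪p.2, w k⟫| ≤ ‖p.1‖ + ‖p.2‖ :=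
    fun k p => abs_inner_snd_le _ (hwn k) p
  have hwb3 : ∀ (k : Fin d) (p : Ed d × Ed d), |⟪p.1 - p.2, w k⟫| ≤ ‖p.1‖ + ‖p.2‖ := by
    intro k p
    calc |⟪p.1 - p.2, w k⟫| ≤ ‖p.1 - p.2‖ * ‖w k‖ := abs_real_inner_le_norm _ _
      _ = ‖p.1 - p.2‖ := by rw [hwn k, mul_one]
      _ ≤ ‖p.1‖ + ‖p.2‖ := norm_sub_le _ _
  have hc1 : ∀ k : Fin d, Continuous fun p : Ed d × Ed d => ⟪p.1, w k⟫ :=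
    fun k => continuous_fst.inner continuous_const
  have hc2 : ∀ k : Fin d, Continuous fun p : Ed d × Ed d => ⟪p.2, w k⟫ :=
    fun k => continuous_snd.inner continuous_const
  have hc3 : ∀ k : Fin d, Continuous fun p : Ed d × Ed d => ⟪p.1 - p.2, w k⟫ :=
    fun k => (continuous_fst.sub continuous_snd).inner continuous_const
  have hIff : ∀ k l, Integrable (fun p : Ed d × Ed d => ⟪p.1, w k⟫ * ⟪p.1, w l⟫) pih :=
    fun k l => inner_pair_integrable hInt (hc1 k) (hc1 l) (hwb1 k) (hwb1 l)
  have hIfg : ∀ k l, Integrable (fun p : Ed d × Ed d => ⟪p.1, w k⟫ * ⟪p.2, w l⟫) pih :=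
    fun k l => inner_pair_integrable hInt (hc1 k) (hc2 l) (hwb1 k) (hwb2 l)
  have hIgg : ∀ k l, Integrable (fun p : Ed d × Ed d => ⟪p.2, w k⟫ * ⟪p.2, w l⟫) pih :=
    fun k l => inner_pair_integrable hInt (hc2 k) (hc2 l) (hwb2 k) (hwb2 l)
  -- the four families of pairings
  set UU : Fin d → Fin d → ℝ := fun k l => ∫ p, ⟪p.1, w k⟫ * ⟪p.1, w l⟫ ∂pih with hUU
  set VV : Fin d → Fin d → ℝ := fun k l => ∫ p, ⟪p.2, w k⟫ * ⟪p.2, w l⟫ ∂pih with hVV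
  set NN : Fin d → Fin d → ℝ := fun k l => ∫ p, ⟪p.1, w k⟫ * ⟪p.2, w l⟫ ∂pih with hNN
  set SS : Fin d → Fin d → ℝ := fun k l => ∫ p, ⟪p.1 - p.2, w k⟫ * ⟪p.1 - p.2, w l⟫ ∂pih
    with hSS
  have key1 : igwCost pih = ∑ k, ∑ l,
      (UU k l ^ 2 + VV k l ^ 2 - NN k l ^ 2 - NN l k ^ 2) := by
    simp only [hUU, hVV, hNN]
    exact igwCost_expand hInt w
  have hSSkl : ∀ k l, SS k l = UU k l + VV k l - NN k l - NN l k := by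
    intro k l
    simp only [hUU, hVV, hNN, hSS]
    have e : (fun p : Ed d × Ed d => ⟪p.1 - p.2, w k⟫ * ⟪p.1 - p.2, w l⟫) = fun p =>
        (⟪p.1, w k⟫ * ⟪p.1, w l⟫ - ⟪p.1, w k⟫ * ⟪p.2, w l⟫ - ⟪p.1, w l⟫ * ⟪p.2, w k⟫)
          + ⟪p.2, w k⟫ * ⟪p.2, w l⟫ := by
      funext p; rw [inner_sub_left, inner_sub_left]; ring
    have hA : Integrable (fun p : Ed d × Ed d =>
        ⟪p.1, w k⟫ * ⟪p.1, w l⟫ - ⟪p.1, w k⟫ * ⟪p.2, w l⟫) pih := (hIff k l).sub (hIfg k l)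
    have hB : Integrable (fun p : Ed d × Ed d =>
        ⟪p.1, w k⟫ * ⟪p.1, w l⟫ - ⟪p.1, w k⟫ * ⟪p.2, w l⟫ - ⟪p.1, w l⟫ * ⟪p.2, w k⟫) pih :=
      hA.sub (hIfg l k)
    rw [e, integral_add hB (hIgg k l), integral_sub hA (hIfg l k),
      integral_sub (hIff k l) (hIfg k l)]
    ring
  have hSM_entry : ∀ k l, SS k l = ∑ i, ∑ j, w k i * w l j * SM i j := by
    intro k l
    simp only [hSS]
    exact expand_pair hInt (continuous_fst.sub continuous_snd)
      (continuous_fst.sub continuous_snd) sub_norm_bound sub_norm_bound (w k) (w l)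
  have SSdiag : ∀ k l, k ≠ l → SS k l = 0 := by
    intro k l hkl
    rw [hSM_entry k l]
    have h1 : ∀ i, ∑ j, w k i * w l j * SM i j = w k i * (SM.mulVec (fun j => w l j) i) := by
      intro i
      rw [Matrix.mulVec, dotProduct, Finset.mul_sum]
      exact Finset.sum_congr rfl fun j _ => by ring
    simp only [h1]
    have h2 : ∀ i, SM.mulVec (fun j => w l j) i = hherm.eigenvalues l * w l i :=
      fun i => congrFun (hherm.mulVec_eigenvectorBasis l) i
    simp only [h2]
    have h3 : ∑ i, w k i * (hherm.eigenvalues l * w l i) =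
        hherm.eigenvalues l * ⟪w k, w l⟫ := by
      rw [ed_inner, Finset.mul_sum]
      exact Finset.sum_congr rfl fun i _ => by ring
    rw [h3, hworth k l hkl, mul_zero]
  have SSd_nonneg : ∀ k, 0 ≤ SS k k := by
    intro k
    simp only [hSS]
    exact integral_nonneg fun p => mul_self_nonneg _
  have htrace : ∑ k, SS k k = ∫ p, ‖p.1 - p.2‖ ^ 2 ∂pih := by
    simp only [hSS]
    have hparse : ∀ p : Ed d × Ed d, ‖p.1 - p.2‖ ^ 2 =
        ∑ k, ⟪p.1 - p.2, w k⟫ * ⟪p.1 - p.2, w k⟫ := fun p => by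
      rw [← real_inner_self_eq_norm_sq]
      exact parseval_inner w _ _
    have h1 : (∫ p, ‖p.1 - p.2‖ ^ 2 ∂pih) =
        ∫ p, ∑ k, ⟪p.1 - p.2, w k⟫ * ⟪p.1 - p.2, w k⟫ ∂pih :=
      integral_congr_ae (Filter.Eventually.of_forall fun p => hparse p)
    rw [h1]
    exact (integral_finset_sum Finset.univ (fun k _ =>
      inner_pair_integrable hInt (hc3 k) (hc3 k) (hwb3 k) (hwb3 k))).symm
  -- structure of the cross-covariance
  have hNP : crossCov pih = P * L * Pᵀ := by
    rw [hpih]; exact N_eq_PLPT hIntπ hQ hM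
  have hNNf : ∀ k l, NN k l =
      ∑ m, L m m * ((∑ i, w k i * P i m) * (∑ j, w l j * P j m)) := by
    intro k l
    simp only [hNN]
    have e := expand_pair hInt (φ := Prod.fst) (ψ := Prod.snd) continuous_fst continuous_snd
      fst_norm_bound snd_norm_bound (w k) (w l)
    rw [e]
    have e2 : ∀ i j, (∫ p : Ed d × Ed d, p.1 i * p.2 j ∂pih) = (P * L * Pᵀ) i j := by
      intro i j; rw [← hNP]; rfl
    simp only [e2]
    exact bilinear_PLPT hLoff (fun i => w k i) (fun j => w l j)
  have hNNsymm : ∀ k l, NN k l = NN l k := by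
    intro k l
    rw [hNNf k l, hNNf l k]
    exact Finset.sum_congr rfl fun m _ => by ring
  have hNN0 : ∀ k, 0 ≤ NN k k := by
    intro k
    rw [hNNf k k]
    exact Finset.sum_nonneg fun m _ => mul_nonneg (hLdiag m) (mul_self_nonneg _)
  -- Rayleigh-quotient bounds
  have hlmu0 : 0 ≤ lambdaMin (covMat μ) := lambdaMin_nonneg hμ.2 hd
  have hlnu0 : 0 ≤ lambdaMin (covMat ν) := lambdaMin_nonneg hν.2 hd
  have hwunit : ∀ k, ∑ i, (w k i) ^ 2 = 1 := by
    intro k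
    have := ed_normsq (w k)
    rw [hwn k] at this
    simpa using this.symm
  have hu_ray : ∀ k, lambdaMin (covMat μ) ≤ UU k k := by
    intro k
    simp only [hUU]
    rw [marg_fst_integral hcoup2 (g := fun x : Ed d => ⟪x, w k⟫ * ⟪x, w k⟫)
      ((continuous_id.inner continuous_const).mul (continuous_id.inner continuous_const))]
    have e : ∀ x : Ed d, ⟪x, w k⟫ * ⟪x, w k⟫ = (∑ i, w k i * x i) ^ 2 := by
      intro x
      rw [ed_inner, sq]
      congr 1 <;> exact Finset.sum_congr rfl fun i _ => by ring
    rw [integral_congr_ae (Filter.Eventually.of_forall e)]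
    exact lambdaMin_le_rayleigh hμ.2 (fun i => w k i) (hwunit k)
  have hv_ray : ∀ k, lambdaMin (covMat ν) ≤ VV k k := by
    intro k
    simp only [hVV]
    rw [marg_snd_integral hcoup2 (g := fun x : Ed d => ⟪x, w k⟫ * ⟪x, w k⟫)
      ((continuous_id.inner continuous_const).mul (continuous_id.inner continuous_const))]
    show (∫ z, ⟪z, w k⟫ * ⟪z, w k⟫ ∂(ν.map (matMap (P * Qᵀ)))) ≥ _
    rw [integral_map (matMap_continuous _).measurable.aemeasurable
      ((continuous_id.inner continuous_const).mul
        (continuous_id.inner continuous_const)).aestronglyMeasurable]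
    set b : Fin d → ℝ := (P * Qᵀ)ᵀ.mulVec (fun i => w k i) with hb
    have hOb : ∀ y : Ed d, ⟪matMap (P * Qᵀ) y, w k⟫ = ∑ i, b i * y i := by
      intro y
      rw [ed_inner]
      show dotProduct ((P * Qᵀ).mulVec (fun j => y j)) (fun i => w k i) =
        dotProduct b (fun i => y i)
      rw [dotProduct_comm, Matrix.dotProduct_mulVec, hb, ← Matrix.mulVec_transpose]
    have hbu : ∑ i, b i ^ 2 = 1 := by
      have h1 : ∑ i, b i ^ 2 = dotProduct b b := by
        simp [dotProduct, sq]
      rw [h1, hb]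
      have h2 : ((P * Qᵀ)ᵀ)ᵀ * (P * Qᵀ)ᵀ = 1 := by
        rw [Matrix.transpose_transpose]; exact hOO
      rw [mulVec_dot_mulVec _ h2]
      show ∑ i, w k i * w k i = 1
      have := hwunit k
      simpa [sq] using this
    have e : ∀ y : Ed d, ⟪matMap (P * Qᵀ) y, w k⟫ * ⟪matMap (P * Qᵀ) y, w k⟫ =
        (∑ i, b i * y i) ^ 2 := fun y => by rw [hOb y, sq]
    rw [integral_congr_ae (Filter.Eventually.of_forall e)]
    exact lambdaMin_le_rayleigh hν.2 b hbu
  have hn_half : ∀ k, NN k k ≤ (UU k k + VV k k) / 2 := by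
    intro k
    simp only [hNN, hUU, hVV]
    have hsumI : Integrable (fun p : Ed d × Ed d =>
        ⟪p.1, w k⟫ * ⟪p.1, w k⟫ + ⟪p.2, w k⟫ * ⟪p.2, w k⟫) pih := (hIff k k).add (hIgg k k)
    have hdivI : Integrable (fun p : Ed d × Ed d =>
        (⟪p.1, w k⟫ * ⟪p.1, w k⟫ + ⟪p.2, w k⟫ * ⟪p.2, w k⟫) / 2) pih := hsumI.div_const 2
    have hmono := integral_mono (μ := pih) (hIfg k k) hdivI
      (fun p => by nlinarith [sq_nonneg (⟪p.1, w k⟫ - ⟪p.2, w k⟫)])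
    rw [integral_div, integral_add (hIff k k) (hIgg k k)] at hmono
    exact hmono
  -- main inequality
  have hmain : Real.sqrt ((lambdaMin (covMat μ) ^ 2 + lambdaMin (covMat ν) ^ 2) / 2) *
      ∑ k, SS k k ≤ igwCost pih := by
    rw [key1, Finset.mul_sum]
    refine Finset.sum_le_sum fun k _ => ?_
    have hterm_eq : ∀ l, UU k l ^ 2 + VV k l ^ 2 - NN k l ^ 2 - NN l k ^ 2 =
        (UU k l - NN k l) ^ 2 + (VV k l - NN k l) ^ 2 + 2 * NN k l * SS k l := by
      intro l
      rw [hSSkl k l, ← hNNsymm k l]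
      ring
    calc Real.sqrt ((lambdaMin (covMat μ) ^ 2 + lambdaMin (covMat ν) ^ 2) / 2) * SS k k
        ≤ (UU k k - NN k k) ^ 2 + (VV k k - NN k k) ^ 2 + 2 * NN k k * SS k k := by
          rw [hSSkl k k]
          have h := perk_ineq (lambdaMin (covMat μ)) (lambdaMin (covMat ν))
            (UU k k) (VV k k) (NN k k) hlmu0 hlnu0 (hu_ray k) (hv_ray k) (hNN0 k) (hn_half k)
          calc Real.sqrt ((lambdaMin (covMat μ) ^ 2 + lambdaMin (covMat ν) ^ 2) / 2) *
              (UU k k + VV k k - NN k k - NN k k)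
              = Real.sqrt ((lambdaMin (covMat μ) ^ 2 + lambdaMin (covMat ν) ^ 2) / 2) *
                (UU k k + VV k k - 2 * NN k k) := by ring
            _ ≤ (UU k k - NN k k) ^ 2 + (VV k k - NN k k) ^ 2 +
                2 * NN k k * (UU k k + VV k k - 2 * NN k k) := h
            _ = (UU k k - NN k k) ^ 2 + (VV k k - NN k k) ^ 2 +
                2 * NN k k * (UU k k + VV k k - NN k k - NN k k) := by ring
      _ ≤ ∑ l, ((UU k l - NN k l) ^ 2 + (VV k l - NN k l) ^ 2 + 2 * NN k l * SS k l) := by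
          refine Finset.single_le_sum (f := fun l =>
            (UU k l - NN k l) ^ 2 + (VV k l - NN k l) ^ 2 + 2 * NN k l * SS k l)
            (fun l _ => ?_) (Finset.mem_univ k)
          rcases eq_or_ne k l with rfl | hkl
          · nlinarith [sq_nonneg (UU k k - NN k k), sq_nonneg (VV k k - NN k k),
              mul_nonneg (hNN0 k) (SSd_nonneg k)]
          · rw [SSdiag k l hkl]
            nlinarith [sq_nonneg (UU k l - NN k l), sq_nonneg (VV k l - NN k l)]
      _ = ∑ l, (UU k l ^ 2 + VV k l ^ 2 - NN k l ^ 2 - NN l k ^ 2) :=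
          Finset.sum_congr rfl fun l _ => (hterm_eq l).symm
  -- Wasserstein bound
  have hW2 : W2 μ (matPush (P * Qᵀ) ν) ≤ Real.sqrt (∑ k, SS k k) := by
    rw [htrace]
    show Real.sqrt (sInf _) ≤ _
    apply Real.sqrt_le_sqrt
    refine csInf_le ⟨0, ?_⟩ ⟨pih, hcoup2, rfl⟩
    rintro c ⟨π', hπ', rfl⟩
    exact integral_nonneg fun p => sq_nonneg _
  have htr0 : 0 ≤ ∑ k, SS k k := Finset.sum_nonneg fun k _ => SSd_nonneg k
  have hconst : ((1 / 2) * (lambdaMin (covMat μ) ^ 2 + lambdaMin (covMat ν) ^ 2)) ^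
      ((1 : ℝ) / 4) =
      Real.sqrt (Real.sqrt ((lambdaMin (covMat μ) ^ 2 + lambdaMin (covMat ν) ^ 2) / 2)) := by
    have hx0 : (0:ℝ) ≤ (1 / 2) * (lambdaMin (covMat μ) ^ 2 + lambdaMin (covMat ν) ^ 2) := by
      positivity
    rw [show ((lambdaMin (covMat μ) ^ 2 + lambdaMin (covMat ν) ^ 2) / 2 : ℝ) =
      (1 / 2) * (lambdaMin (covMat μ) ^ 2 + lambdaMin (covMat ν) ^ 2) by ring]
    rw [Real.sqrt_eq_rpow, Real.sqrt_eq_rpow, ← Real.rpow_mul hx0]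
    norm_num
  calc ((1 / 2) * (lambdaMin (covMat μ) ^ 2 + lambdaMin (covMat ν) ^ 2)) ^ ((1 : ℝ) / 4) *
      W2 μ (matPush (P * Qᵀ) ν)
      ≤ ((1 / 2) * (lambdaMin (covMat μ) ^ 2 + lambdaMin (covMat ν) ^ 2)) ^ ((1 : ℝ) / 4) *
        Real.sqrt (∑ k, SS k k) := by
        refine mul_le_mul_of_nonneg_left hW2 ?_
        positivity
    _ = Real.sqrt (Real.sqrt ((lambdaMin (covMat μ) ^ 2 + lambdaMin (covMat ν) ^ 2) / 2) *
        ∑ k, SS k k) := by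
        rw [hconst, ← Real.sqrt_mul (Real.sqrt_nonneg _)]
    _ ≤ Real.sqrt (igwCost pih) := Real.sqrt_le_sqrt hmain
    _ = Real.sqrt (igwCost π) := by rw [hpih, igwCost_pihat _ hOT]
    _ ≤ IGW μ ν := hIGW_ge

end AuxIGW7

/-- IGW and Wasserstein comparison. -/
theorem igw_wasserstein_comparison (d : ℕ) (μ ν : Measure (Ed d)) (hμ : P2 μ) (hν : P2 ν) :
    IGW μ ν ≤ Real.sqrt (2 * M2 μ + 2 * M2 ν) * W2 μ ν ∧
    (IsUnit (covMat μ).det → IsUnit (covMat ν).det →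
      ∀ O ∈ OSet μ ν,
        ((1 / 2) * (lambdaMin (covMat μ) ^ 2 + lambdaMin (covMat ν) ^ 2)) ^ ((1 : ℝ) / 4) *
            W2 μ (matPush O ν) ≤ IGW μ ν) := by
  exact ⟨part1 μ ν hμ hν, fun _ _ O hO => part2 μ ν hμ hν O hO⟩
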